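/- Let $\mathfrak{a}$ be a zero-dimensional monomial ideal in $R = K[x_1,\dots,x_n]$, and suppose there exist positive reals $a_1,\dots,a_n$ defining a supporting hyperplane $\sum_i u_i/a_i = 1$ of the Newton polytope of $\mathfrak{a}$ (so every exponent vector $u$ of a monomial in $\mathfrak{a}$ satisfies $\sum_i u_i/a_i \ge 1$). Let $\mu \in \mathbb{Q}_{>0}$ and $b_1,\dots,b_n \in \mathbb{Q}$ with $\mu \ge \max_i b_i$ and $\sum_{i=1}^n (\mu - b_i)/a_i \le 1$. Then $\dim_K(R/\mathfrak{a}) \ge \frac{n^n}{n!}\prod_{i=1}^n (\mu - b_i)$, with strict inequality if $n \ge 2$. -/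

import Mathlib

/-!
By the supporting hyperplane condition, no monomial `x^u` with `∑ uᵢ/aᵢ < 1` lies in the
monomial ideal `𝔞`, so these monomials are linearly independent in `R/𝔞` and `dim_K R/𝔞`
is at least the number of lattice points of the open simplex `∑ uᵢ/aᵢ < 1`. The slice of
that simplex at first coordinate `k` is the simplex with legs scaled by `1 - k/a₀`, so by
induction the count is at least `∏ aᵢ/n!` times a left Riemann sum of `t ↦ (1 - t/a₀)^(n-1)`;
that sum dominates the integral `a₀/n`, strictly when `n ≥ 2`. Finally AM-GM applied to the
numbers `(μ - bᵢ)/aᵢ`, whose sum is at most `1`, gives `nⁿ ∏ (μ - bᵢ) ≤ ∏ aᵢ`.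
-/

open Finset MvPolynomial

lemma pow_succ_sub_pow_succ_le {x y : ℝ} (hy : 0 ≤ y) (hyx : y ≤ x) (m : ℕ) :
    x ^ (m + 1) - y ^ (m + 1) ≤ (m + 1) * x ^ m * (x - y) := by
  have := pow_add_mul_le_add_pow (a := x) (b := y - x) (by linarith) (by linarith) (m + 1)
  simp only [add_sub_cancel, Nat.add_sub_cancel, Nat.cast_succ] at this
  linarith

lemma one_sub_pow_succ_lt {y : ℝ} (hy0 : 0 ≤ y) (hy1 : y < 1) {m : ℕ} (hm : m ≠ 0) :
    1 - y ^ (m + 1) < (m + 1) * (1 - y) := by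
  have hbern := one_add_mul_sub_le_pow (by linarith : -1 ≤ y) m
  have hm1 : (1 : ℝ) ≤ m := by exact_mod_cast Nat.one_le_iff_ne_zero.2 hm
  rw [pow_succ]
  nlinarith [mul_le_mul_of_nonneg_right hbern hy0, mul_pos (by linarith : (0:ℝ) < m)
    (pow_pos (by linarith : 0 < 1 - y) 2)]

lemma card_pow_mul_prod_le_one {ι : Type*} [Fintype ι] {z : ι → ℝ} (hz : ∀ i, 0 ≤ z i)
    (hsum : ∑ i, z i ≤ 1) : (Fintype.card ι : ℝ) ^ Fintype.card ι * ∏ i, z i ≤ 1 := by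
  have hz' : ∀ i ∈ univ, 0 ≤ z i := fun i _ => hz i
  have hamgm := Real.geom_mean_le_arith_mean univ (fun _ => 1) z (fun _ _ => zero_le_one)
  simp only [Real.rpow_one, sum_const, card_univ, nsmul_eq_mul, mul_one, one_mul] at hamgm
  generalize hcard : Fintype.card ι = N at hamgm ⊢
  rcases Nat.eq_zero_or_pos N with rfl | hN
  · simp [Fintype.card_eq_zero_iff.1 hcard]
  have hN' : (0 : ℝ) < N := by exact_mod_cast hN
  have hmean : (∑ i, z i) / N ≤ (N : ℝ)⁻¹ := by
    rw [div_eq_mul_inv]; exact mul_le_of_le_one_left (by positivity) hsum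
  have hprod : ∏ i, z i ≤ (N : ℝ)⁻¹ ^ N := calc
    ∏ i, z i = ((∏ i, z i) ^ (N : ℝ)⁻¹) ^ N :=
      (Real.rpow_inv_natCast_pow (prod_nonneg hz') hN.ne').symm
    _ ≤ (N : ℝ)⁻¹ ^ N :=
      pow_le_pow_left₀ (Real.rpow_nonneg (prod_nonneg hz') _) ((hamgm hN' hz').trans hmean) _
  calc (N : ℝ) ^ N * ∏ i, z i ≤ (N : ℝ) ^ N * (N : ℝ)⁻¹ ^ N := by gcongr
    _ = 1 := by rw [← mul_pow, mul_inv_cancel₀ hN'.ne', one_pow]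

lemma card_pow_mul_prod_le_prod {ι : Type*} [Fintype ι] {a c : ι → ℝ} (ha : ∀ i, 0 < a i)
    (hc : ∀ i, 0 ≤ c i) (hsum : ∑ i, c i / a i ≤ 1) :
    (Fintype.card ι : ℝ) ^ Fintype.card ι * ∏ i, c i ≤ ∏ i, a i := by
  have hca : ∏ i, c i = (∏ i, a i) * ∏ i, c i / a i := by
    rw [← prod_mul_distrib]
    exact prod_congr rfl fun i _ => (mul_div_cancel₀ _ (ha i).ne').symm
  have := card_pow_mul_prod_le_one (fun i => div_nonneg (hc i) (ha i).le) hsum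
  rw [hca, mul_left_comm]
  exact mul_le_of_le_one_right (prod_nonneg fun i _ => (ha i).le) this

/-! The `k`-th term of the left Riemann sum of `t ↦ (1 - t/a)^m` on `[0, ⌈a⌉]` dominates
`a/(m+1)` times the telescoping increment of `t ↦ max (1 - t/a) 0 ^ (m+1)` over `[k, k+1]`. -/

section RiemannSum

variable {a : ℝ}

lemma sum_range_ceil_max_pow_succ_sub_eq_one (ha : 0 < a) (m : ℕ) :
    ∑ k ∈ range ⌈a⌉₊,
      (max (1 - k / a) 0 ^ (m + 1) - max (1 - (k + 1 : ℕ) / a) 0 ^ (m + 1)) = 1 := by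
  rw [sum_range_sub' (fun k : ℕ => max (1 - k / a) 0 ^ (m + 1))]
  have hceil : 1 ≤ (⌈a⌉₊ : ℝ) / a := (one_le_div ha).2 (Nat.le_ceil a)
  simp [max_eq_right (by linarith : 1 - (⌈a⌉₊ : ℝ) / a ≤ 0)]

lemma max_pow_succ_sub_max_pow_succ_le (ha : 0 < a) {k : ℕ} (hk : (k : ℝ) < a) (m : ℕ) :
    max (1 - k / a) 0 ^ (m + 1) - max (1 - (k + 1 : ℕ) / a) 0 ^ (m + 1)
      ≤ (m + 1) / a * (1 - k / a) ^ m := by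
  have hx : 0 < 1 - k / a := by rw [sub_pos, div_lt_one ha]; exact hk
  have hstep : 1 - (k + 1 : ℕ) / a = 1 - k / a - 1 / a := by push_cast; ring
  rw [max_eq_left hx.le, hstep]
  have hy : max (1 - k / a - 1 / a) 0 ≤ 1 - k / a := max_le (by simp [ha.le]) hx.le
  have hgap : 1 - k / a - max (1 - k / a - 1 / a) 0 ≤ 1 / a := by
    linarith [le_max_left (1 - k / a - 1 / a) 0]
  calc _ ≤ (m + 1) * (1 - k / a) ^ m * (1 - k / a - max (1 - k / a - 1 / a) 0) :=
        pow_succ_sub_pow_succ_le (le_max_right _ _) hy m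
    _ ≤ (m + 1) * (1 - k / a) ^ m * (1 / a) := by gcongr
    _ = (m + 1) / a * (1 - k / a) ^ m := by ring

lemma max_pow_succ_sub_max_pow_succ_lt_at_zero (ha : 0 < a) {m : ℕ} (hm : m ≠ 0) :
    max (1 - ((0 : ℕ) : ℝ) / a) 0 ^ (m + 1) - max (1 - (0 + 1 : ℕ) / a) 0 ^ (m + 1)
      < (m + 1) / a * (1 - ((0 : ℕ) : ℝ) / a) ^ m := by
  have hy1 : max (1 - 1 / a) 0 < 1 := max_lt (by simp [ha]) one_pos
  have hgap : 1 - max (1 - 1 / a) 0 ≤ 1 / a := by linarith [le_max_left (1 - 1 / a) 0]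
  simp only [Nat.cast_zero, zero_div, sub_zero, zero_add, Nat.cast_one, max_eq_left zero_le_one,
    one_pow, mul_one]
  calc _ < (m + 1) * (1 - max (1 - 1 / a) 0) := one_sub_pow_succ_lt (le_max_right _ _) hy1 hm
    _ ≤ (m + 1) * (1 / a) := by gcongr
    _ = (m + 1) / a := by ring

lemma div_succ_le_sum_range_ceil (ha : 0 < a) (m : ℕ) :
    a / (m + 1) ≤ ∑ k ∈ range ⌈a⌉₊, (1 - k / a) ^ m := by
  have h := sum_le_sum fun k hk =>
    max_pow_succ_sub_max_pow_succ_le ha (Nat.lt_ceil.1 (mem_range.1 hk)) m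
  rw [sum_range_ceil_max_pow_succ_sub_eq_one ha, ← mul_sum, div_mul_eq_mul_div,
    le_div_iff₀ ha] at h
  rw [div_le_iff₀ (by positivity)]
  linarith

lemma div_succ_lt_sum_range_ceil (ha : 0 < a) {m : ℕ} (hm : m ≠ 0) :
    a / (m + 1) < ∑ k ∈ range ⌈a⌉₊, (1 - k / a) ^ m := by
  have h := sum_lt_sum
    (fun k hk => max_pow_succ_sub_max_pow_succ_le ha (Nat.lt_ceil.1 (mem_range.1 hk)) m)
    ⟨0, mem_range.2 (Nat.ceil_pos.2 ha), max_pow_succ_sub_max_pow_succ_lt_at_zero ha hm⟩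
  rw [sum_range_ceil_max_pow_succ_sub_eq_one ha, ← mul_sum, div_mul_eq_mul_div,
    lt_div_iff₀ ha] at h
  rw [div_lt_iff₀ (by positivity)]
  linarith

end RiemannSum

/-- The box `∏ range ⌈aᵢ⌉` only makes the set visibly finite; see
`mem_simplexLatticePoints`. -/
noncomputable def simplexLatticePoints {n : ℕ} (a : Fin n → ℝ) : Finset (Fin n → ℕ) :=
  {u ∈ Fintype.piFinset fun i => range ⌈a i⌉₊ | ∑ i, (u i : ℝ) / a i < 1}

section SimplexLatticePoints

variable {n : ℕ} {a : Fin n → ℝ}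

lemma mem_simplexLatticePoints (ha : ∀ i, 0 < a i) {u : Fin n → ℕ} :
    u ∈ simplexLatticePoints a ↔ ∑ i, (u i : ℝ) / a i < 1 := by
  refine ⟨fun h => (mem_filter.1 h).2, fun h => mem_filter.2 ⟨?_, h⟩⟩
  refine Fintype.mem_piFinset.2 fun i => mem_range.2 (Nat.lt_ceil.2 ?_)
  have hi : (u i : ℝ) / a i ≤ ∑ j, (u j : ℝ) / a j :=
    single_le_sum (fun j _ => div_nonneg (Nat.cast_nonneg _) (ha j).le) (mem_univ i)
  exact (div_lt_one (ha i)).1 (hi.trans_lt h)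

lemma mem_simplexLatticePoints_const_mul (ha : ∀ i, 0 < a i) {s : ℝ} (hs : 0 < s)
    {u : Fin n → ℕ} :
    u ∈ simplexLatticePoints (fun i => s * a i) ↔ ∑ i, (u i : ℝ) / a i < s := by
  rw [mem_simplexLatticePoints fun i => mul_pos hs (ha i)]
  simp_rw [div_mul_eq_div_div_swap, ← sum_div]
  exact div_lt_one hs

lemma one_le_card_simplexLatticePoints (ha : ∀ i, 0 < a i) : 1 ≤ #(simplexLatticePoints a) :=
  card_pos.2 ⟨0, (mem_simplexLatticePoints ha).2 (by simp)⟩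

end SimplexLatticePoints

lemma sum_card_simplexLatticePoints_slice_le {n : ℕ} {a : Fin (n + 1) → ℝ}
    (ha : ∀ i, 0 < a i) :
    ∑ k ∈ range ⌈a 0⌉₊, #(simplexLatticePoints fun i : Fin n => (1 - k / a 0) * a i.succ)
      ≤ #(simplexLatticePoints a) := by
  rw [← card_sigma]
  refine card_le_card_of_injOn (fun p => Fin.cons p.1 p.2) ?_ ?_
  · rintro ⟨k, u⟩ hku
    obtain ⟨hk, hu⟩ := mem_sigma.1 hku
    have hk' : (k : ℝ) / a 0 < 1 := (div_lt_one (ha 0)).2 (Nat.lt_ceil.1 (mem_range.1 hk))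
    rw [mem_simplexLatticePoints_const_mul (fun i => ha i.succ) (by linarith)] at hu
    rw [mem_coe, mem_simplexLatticePoints ha, Fin.sum_univ_succ]
    simp only [Fin.cons_zero, Fin.cons_succ]
    linarith
  · rintro ⟨k, u⟩ - ⟨k', u'⟩ - h
    obtain ⟨rfl, rfl⟩ := Fin.cons_injective2 h
    rfl

lemma prod_div_factorial_succ {n : ℕ} (a : Fin (n + 1) → ℝ) :
    (∏ i, a i) / (n + 1).factorial
      = (∏ i : Fin n, a i.succ) / n.factorial * (a 0 / (n + 1)) := by
  rw [Fin.prod_univ_succ, Nat.factorial_succ]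
  push_cast
  field_simp

lemma prod_div_factorial_mul_sum_le_card {n : ℕ} {a : Fin (n + 1) → ℝ} (ha : ∀ i, 0 < a i)
    (hslice : ∀ a' : Fin n → ℝ, (∀ i, 0 < a' i) →
      (∏ i, a' i) / n.factorial ≤ #(simplexLatticePoints a')) :
    (∏ i : Fin n, a i.succ) / n.factorial * ∑ k ∈ range ⌈a 0⌉₊, (1 - k / a 0) ^ n
      ≤ #(simplexLatticePoints a) := by
  calc _ = ∑ k ∈ range ⌈a 0⌉₊,
          (∏ i : Fin n, (1 - k / a 0) * a i.succ) / n.factorial := by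
        simp_rw [mul_sum, prod_mul_distrib, prod_const, card_univ, Fintype.card_fin]
        exact sum_congr rfl fun k _ => by ring
    _ ≤ ∑ k ∈ range ⌈a 0⌉₊,
          (#(simplexLatticePoints fun i : Fin n => (1 - k / a 0) * a i.succ) : ℝ) := by
        refine sum_le_sum fun k hk => hslice _ fun i => mul_pos ?_ (ha i.succ)
        rw [sub_pos, div_lt_one (ha 0)]
        exact Nat.lt_ceil.1 (mem_range.1 hk)
    _ ≤ #(simplexLatticePoints a) := by
        exact_mod_cast sum_card_simplexLatticePoints_slice_le ha

theorem prod_div_factorial_le_card_simplexLatticePoints :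
    ∀ {n : ℕ} {a : Fin n → ℝ}, (∀ i, 0 < a i) →
      (∏ i, a i) / n.factorial ≤ #(simplexLatticePoints a)
  | 0, a, ha => by simpa using one_le_card_simplexLatticePoints ha
  | n + 1, a, ha => by
    have hP : 0 < (∏ i : Fin n, a i.succ) / n.factorial :=
      div_pos (prod_pos fun i _ => ha i.succ) (by positivity)
    calc _ = (∏ i : Fin n, a i.succ) / n.factorial * (a 0 / (n + 1)) := prod_div_factorial_succ a
      _ ≤ (∏ i : Fin n, a i.succ) / n.factorial
            * ∑ k ∈ range ⌈a 0⌉₊, (1 - k / a 0) ^ n :=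
        mul_le_mul_of_nonneg_left (div_succ_le_sum_range_ceil (ha 0) n) hP.le
      _ ≤ _ := prod_div_factorial_mul_sum_le_card ha
          fun _ => prod_div_factorial_le_card_simplexLatticePoints

theorem prod_div_factorial_lt_card_simplexLatticePoints {n : ℕ} (hn : 2 ≤ n) {a : Fin n → ℝ}
    (ha : ∀ i, 0 < a i) : (∏ i, a i) / n.factorial < #(simplexLatticePoints a) := by
  obtain ⟨m, rfl⟩ : ∃ m, n = m + 1 := ⟨n - 1, by omega⟩
  have hP : 0 < (∏ i : Fin m, a i.succ) / m.factorial :=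
    div_pos (prod_pos fun i _ => ha i.succ) (by positivity)
  calc _ = (∏ i : Fin m, a i.succ) / m.factorial * (a 0 / (m + 1)) := prod_div_factorial_succ a
    _ < (∏ i : Fin m, a i.succ) / m.factorial * ∑ k ∈ range ⌈a 0⌉₊, (1 - k / a 0) ^ m :=
      mul_lt_mul_of_pos_left (div_succ_lt_sum_range_ceil (ha 0) (by omega)) hP
    _ ≤ _ := prod_div_factorial_mul_sum_le_card ha
        fun _ => prod_div_factorial_le_card_simplexLatticePoints

lemma linearIndependent_mk_monomial {σ R : Type*} [CommRing R] {I : Ideal (MvPolynomial σ R)}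
    (hI : ∀ f ∈ I, ∀ u ∈ f.support, monomial u (1 : R) ∈ I) {s : Set (σ →₀ ℕ)}
    (hs : ∀ u ∈ s, monomial u (1 : R) ∉ I) :
    LinearIndependent R fun u : s =>
      Ideal.Quotient.mk I (monomial (u : σ →₀ ℕ) (1 : R)) := by
  have hv : LinearIndependent R fun u : s => monomial (u : σ →₀ ℕ) (1 : R) :=
    (basisMonomials σ R).linearIndependent.comp _ Subtype.val_injective
  refine hv.map (f := (Ideal.Quotient.mkₐ R I).toLinearMap) (Submodule.disjoint_def.2 ?_)
  intro f hf hfI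
  have hrange :
      Set.range (fun u : s => monomial (u : σ →₀ ℕ) (1 : R)) = (monomial · 1) '' s := by
    ext; simp
  rw [hrange, ← restrictSupport_eq_span, mem_restrictSupport_iff] at hf
  rw [LinearMap.mem_ker, AlgHom.toLinearMap_apply, Ideal.Quotient.mkₐ_eq_mk,
    Ideal.Quotient.eq_zero_iff_mem] at hfI
  by_contra hf0
  obtain ⟨u, hu⟩ := support_nonempty.2 hf0
  exact hs u (hf hu) (hI f hfI u hu)

lemma card_le_finrank_quotient_of_monomial_notMem {σ K : Type*} [Field K]
    {I : Ideal (MvPolynomial σ K)} [FiniteDimensional K (MvPolynomial σ K ⧸ I)]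
    (hI : ∀ f ∈ I, ∀ u ∈ f.support, monomial u (1 : K) ∈ I) {s : Finset (σ →₀ ℕ)}
    (hs : ∀ u ∈ s, monomial u (1 : K) ∉ I) :
    #s ≤ Module.finrank K (MvPolynomial σ K ⧸ I) := by
  simpa using (linearIndependent_mk_monomial hI (s := ↑s) hs).fintype_card_le_finrank

lemma card_simplexLatticePoints_le_finrank {K : Type*} [Field K] {n : ℕ}
    {I : Ideal (MvPolynomial (Fin n) K)} [FiniteDimensional K (MvPolynomial (Fin n) K ⧸ I)]
    (hI : ∀ f ∈ I, ∀ u ∈ f.support, monomial u (1 : K) ∈ I) {a : Fin n → ℝ}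
    (ha : ∀ i, 0 < a i)
    (hNewton : ∀ u : Fin n →₀ ℕ, monomial u (1 : K) ∈ I → 1 ≤ ∑ i, (u i : ℝ) / a i) :
    #(simplexLatticePoints a) ≤ Module.finrank K (MvPolynomial (Fin n) K ⧸ I) := by
  rw [← card_map Finsupp.equivFunOnFinite.symm.toEmbedding]
  refine card_le_finrank_quotient_of_monomial_notMem hI fun u hu huI => ?_
  obtain ⟨v, hv, rfl⟩ := mem_map.1 hu
  have := hNewton _ huI
  simp only [Equiv.coe_toEmbedding, Finsupp.coe_equivFunOnFinite_symm] at this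
  exact (mem_simplexLatticePoints ha).1 hv |>.not_ge this

theorem stmt6_general (K : Type*) [Field K] (n : ℕ)
    (I : Ideal (MvPolynomial (Fin n) K))
    (hmono : ∀ f ∈ I, ∀ u ∈ f.support, (monomial u (1 : K)) ∈ I)
    (hfin : FiniteDimensional K (MvPolynomial (Fin n) K ⧸ I))
    (a : Fin n → ℝ) (ha : ∀ i, 0 < a i)
    (hNewton : ∀ u : Fin n →₀ ℕ, (monomial u (1 : K)) ∈ I →
      1 ≤ ∑ i, (u i : ℝ) / a i)
    (μ : ℚ) (b : Fin n → ℚ) (hb : ∀ i, b i ≤ μ)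
    (hfacet : ∑ i, ((μ : ℝ) - (b i : ℝ)) / a i ≤ 1) :
    ((n : ℝ) ^ n / (Nat.factorial n : ℝ)) * ∏ i, ((μ : ℝ) - (b i : ℝ)) ≤
      (Module.finrank K (MvPolynomial (Fin n) K ⧸ I) : ℝ) ∧
    (2 ≤ n →
      ((n : ℝ) ^ n / (Nat.factorial n : ℝ)) * ∏ i, ((μ : ℝ) - (b i : ℝ)) <
        (Module.finrank K (MvPolynomial (Fin n) K ⧸ I) : ℝ)) := by
  have hc : ∀ i, 0 ≤ (μ : ℝ) - b i := fun i => sub_nonneg.2 (by exact_mod_cast hb i)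
  have hamgm :
      ((n : ℝ) ^ n / n.factorial) * ∏ i, ((μ : ℝ) - b i) ≤ (∏ i, a i) / n.factorial := by
    rw [div_mul_eq_mul_div]
    gcongr
    simpa using card_pow_mul_prod_le_prod ha hc hfacet
  have hdim :
      (#(simplexLatticePoints a) : ℝ) ≤ Module.finrank K (MvPolynomial (Fin n) K ⧸ I) :=
    Nat.cast_le.2 (card_simplexLatticePoints_le_finrank hmono ha hNewton)
  refine ⟨(hamgm.trans (prod_div_factorial_le_card_simplexLatticePoints ha)).trans hdim,
    fun hn => ?_⟩
  exact (hamgm.trans_lt (prod_div_factorial_lt_card_simplexLatticePoints hn ha)).trans_le hdim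

/-- Combinatorial content of Lemma 2.4: if the hyperplane `∑ uᵢ/aᵢ = 1`
supports the Newton polytope of a zero-dimensional monomial ideal `𝔞`, and
`μ ∈ ℚ_{>0}`, `bᵢ ∈ ℚ` satisfy `μ ≥ max bᵢ` and `∑ (μ - bᵢ)/aᵢ ≤ 1`, then
`dim_K R/𝔞 ≥ (nⁿ/n!) ∏ (μ - bᵢ)`, with strict inequality if `n ≥ 2`. -/
theorem stmt6 (K : Type*) [Field K] (n : ℕ) (hn : 1 ≤ n)
    (I : Ideal (MvPolynomial (Fin n) K))
    (hmono : ∀ f ∈ I, ∀ u ∈ f.support, (monomial u (1 : K)) ∈ I)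
    (hfin : FiniteDimensional K (MvPolynomial (Fin n) K ⧸ I))
    (hI : I ≠ ⊤)
    (a : Fin n → ℝ) (ha : ∀ i, 0 < a i)
    (hNewton : ∀ u : Fin n →₀ ℕ, (monomial u (1 : K)) ∈ I →
      1 ≤ ∑ i, (u i : ℝ) / a i)
    (μ : ℚ) (hμ : 0 < μ) (b : Fin n → ℚ) (hb : ∀ i, b i ≤ μ)
    (hfacet : ∑ i, ((μ : ℝ) - (b i : ℝ)) / a i ≤ 1) :
    ((n : ℝ) ^ n / (Nat.factorial n : ℝ)) * ∏ i, ((μ : ℝ) - (b i : ℝ)) ≤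
      (Module.finrank K (MvPolynomial (Fin n) K ⧸ I) : ℝ) ∧
    (2 ≤ n →
      ((n : ℝ) ^ n / (Nat.factorial n : ℝ)) * ∏ i, ((μ : ℝ) - (b i : ℝ)) <
        (Module.finrank K (MvPolynomial (Fin n) K ⧸ I) : ℝ)) :=
  stmt6_general K n I hmono hfin a ha hNewton μ b hb hfacet
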